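/- arXiv:1209.3885 — 3 statements merged into one kernel-verified Lean document; each statement's English description precedes it below -/
import Mathlib

section
/- Fix n ≥ 1, j ∈ ℕ, and smooth functions χ₀,…,χ_j and η₀,…,η_j on ℝⁿ satisfying χ₀ + η₀ ≡ 1 on ℝⁿ and η_k ≡ χ_{k+1} + η_{k+1} on ℝⁿ for k = 0,…,j−1. Let σ ∈ ℕ₀ⁿ be a multiindex with |σ| = j, let 1 ≤ ℓ ≤ j be an integer, and choose multiindices β₀,…,β_ℓ ∈ ℕ₀ⁿ with |β_k| = k for k = 0,…,ℓ, β_{k−1} ≤ β_k (componentwise) for k = 1,…,ℓ, and β_ℓ ≤ σ (componentwise). Set μ_k = β_{k+1} − β_k for k = 0,…,ℓ−1 (so |μ_k| = 1). Then for every g ∈ C^∞(ℝⁿ): D^σ g = Σ_{k=0}^{ℓ} D^{β_k}(χ_k · D^{σ−β_k} g) + Σ_{k=0}^{ℓ−1} D^{β_k}( η_k · D^{μ_k}(D^{σ−β_{k+1}} g) − D^{μ_k}(η_k · D^{σ−β_{k+1}} g) ) + D^{β_ℓ}(η_ℓ · D^{σ−β_ℓ} g), as an identity of functions on ℝⁿ.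 -/
open MeasureTheory Metric Real Finset

/-- The partial derivative `∂/∂xᵢ` of a function on `ℝⁿ` (Euclidean space). -/
noncomputable def partialDeriv {n : ℕ} {F : Type*} [NormedAddCommGroup F] [NormedSpace ℝ F]
    (i : Fin n) (f : EuclideanSpace ℝ (Fin n) → F) : EuclideanSpace ℝ (Fin n) → F :=
  fun x => fderiv ℝ f x (EuclideanSpace.single i (1 : ℝ))

/-- The multiindex derivative `D^β = ∂^{β₁}_{x₁} ⋯ ∂^{βₙ}_{xₙ}`. -/
noncomputable def mderiv {n : ℕ} {F : Type*} [NormedAddCommGroup F] [NormedSpace ℝ F]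
    (β : Fin n → ℕ) (f : EuclideanSpace ℝ (Fin n) → F) : EuclideanSpace ℝ (Fin n) → F :=
  (List.finRange n).foldr (fun i g => (partialDeriv i)^[β i] g) f

/-- The length `|β| = β₁ + ⋯ + βₙ` of a multiindex. -/
def msize {n : ℕ} (β : Fin n → ℕ) : ℕ := ∑ i, β i

/-- The factorial `β! = β₁! ⋯ βₙ!` of a multiindex. -/
def mfactorial {n : ℕ} (β : Fin n → ℕ) : ℕ := ∏ i, (β i).factorial

section Aux
variable {n : ℕ} {F : Type*} [NormedAddCommGroup F] [NormedSpace ℝ F]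

noncomputable def md (L : List (Fin n)) (β : Fin n → ℕ)
    (f : EuclideanSpace ℝ (Fin n) → F) : EuclideanSpace ℝ (Fin n) → F :=
  L.foldr (fun i g => (partialDeriv i)^[β i] g) f

lemma pd_smooth (i : Fin n) {f : EuclideanSpace ℝ (Fin n) → F} (hf : ContDiff ℝ (⊤ : ℕ∞) f) :
    ContDiff ℝ (⊤ : ℕ∞) (partialDeriv i f) :=
  (hf.fderiv_right (by simp)).clm_apply contDiff_const

lemma pd_iter_smooth (i : Fin n) (m : ℕ) {f : EuclideanSpace ℝ (Fin n) → F}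
    (hf : ContDiff ℝ (⊤ : ℕ∞) f) : ContDiff ℝ (⊤ : ℕ∞) ((partialDeriv i)^[m] f) := by
  induction m with
  | zero => exact hf
  | succ m ih => rw [Function.iterate_succ_apply']; exact pd_smooth i ih

lemma md_smooth (L : List (Fin n)) (β : Fin n → ℕ) {f : EuclideanSpace ℝ (Fin n) → F}
    (hf : ContDiff ℝ (⊤ : ℕ∞) f) : ContDiff ℝ (⊤ : ℕ∞) (md L β f) := by
  induction L with
  | nil => exact hf
  | cons i L ih => exact pd_iter_smooth i (β i) ih

lemma mderiv_smooth (β : Fin n → ℕ) {f : EuclideanSpace ℝ (Fin n) → F}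
    (hf : ContDiff ℝ (⊤ : ℕ∞) f) : ContDiff ℝ (⊤ : ℕ∞) (mderiv β f) := md_smooth _ _ hf

lemma pd_comm (i i' : Fin n) {f : EuclideanSpace ℝ (Fin n) → F} (hf : ContDiff ℝ (⊤ : ℕ∞) f) :
    partialDeriv i (partialDeriv i' f) = partialDeriv i' (partialDeriv i f) := by
  funext x
  have hd : DifferentiableAt ℝ (fderiv ℝ f) x :=
    ((hf.fderiv_right (m := (⊤ : ℕ∞)) (by simp)).differentiable (by simp)) x
  have h : ∀ (v : EuclideanSpace ℝ (Fin n)),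
      fderiv ℝ (fun y => fderiv ℝ f y v) x = (fderiv ℝ (fderiv ℝ f) x).flip v := by
    intro v
    rw [fderiv_clm_apply hd (differentiableAt_const v)]
    simp
  have hsymm := ((hf.contDiffAt (x := x)).isSymmSndFDerivAt (by rw [minSmoothness_of_isRCLikeNormedField]; exact WithTop.coe_le_coe.mpr le_top)).eq
  show fderiv ℝ (fun y => fderiv ℝ f y (EuclideanSpace.single i' 1)) x (EuclideanSpace.single i 1)
      = fderiv ℝ (fun y => fderiv ℝ f y (EuclideanSpace.single i 1)) x (EuclideanSpace.single i' 1)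
  rw [h, h]
  exact hsymm _ _

lemma pd_iter_comm (i i' : Fin n) (m : ℕ) {f : EuclideanSpace ℝ (Fin n) → F}
    (hf : ContDiff ℝ (⊤ : ℕ∞) f) :
    partialDeriv i ((partialDeriv i')^[m] f) = (partialDeriv i')^[m] (partialDeriv i f) := by
  induction m with
  | zero => rfl
  | succ m ih =>
      rw [Function.iterate_succ_apply', Function.iterate_succ_apply',
        pd_comm i i' (pd_iter_smooth i' m hf), ih]

lemma pd_md_comm (L : List (Fin n)) (i : Fin n) (β : Fin n → ℕ)
    {f : EuclideanSpace ℝ (Fin n) → F} (hf : ContDiff ℝ (⊤ : ℕ∞) f) :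
    partialDeriv i (md L β f) = md L β (partialDeriv i f) := by
  induction L with
  | nil => rfl
  | cons i' L ih =>
      show partialDeriv i ((partialDeriv i')^[β i'] (md L β f))
        = (partialDeriv i')^[β i'] (md L β (partialDeriv i f))
      rw [pd_iter_comm i i' (β i') (md_smooth L β hf), ih]

lemma pd_iter_md_comm (L : List (Fin n)) (i : Fin n) (m : ℕ) (β : Fin n → ℕ)
    {f : EuclideanSpace ℝ (Fin n) → F} (hf : ContDiff ℝ (⊤ : ℕ∞) f) :
    (partialDeriv i)^[m] (md L β f) = md L β ((partialDeriv i)^[m] f) := by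
  induction m with
  | zero => rfl
  | succ m ih =>
      rw [Function.iterate_succ_apply', Function.iterate_succ_apply', ih,
        pd_md_comm L i β (pd_iter_smooth i m hf)]

lemma md_comp (L : List (Fin n)) (β γ : Fin n → ℕ) {f : EuclideanSpace ℝ (Fin n) → F}
    (hf : ContDiff ℝ (⊤ : ℕ∞) f) :
    md L (fun i => β i + γ i) f = md L β (md L γ f) := by
  induction L with
  | nil => rfl
  | cons i L ih =>
      show (partialDeriv i)^[β i + γ i] (md L (fun i => β i + γ i) f)
        = (partialDeriv i)^[β i] (md L β ((partialDeriv i)^[γ i] (md L γ f)))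
      rw [ih, ← pd_iter_md_comm L i (γ i) β (md_smooth L γ hf),
        ← Function.iterate_add_apply]

lemma mderiv_comp (β γ : Fin n → ℕ) {f : EuclideanSpace ℝ (Fin n) → F}
    (hf : ContDiff ℝ (⊤ : ℕ∞) f) :
    mderiv (fun i => β i + γ i) f = mderiv β (mderiv γ f) := md_comp _ β γ hf

lemma pd_add (i : Fin n) {f g : EuclideanSpace ℝ (Fin n) → F}
    (hf : ContDiff ℝ (⊤ : ℕ∞) f) (hg : ContDiff ℝ (⊤ : ℕ∞) g) :
    partialDeriv i (fun y => f y + g y) = fun y => partialDeriv i f y + partialDeriv i g y := by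
  funext x
  show fderiv ℝ (fun y => f y + g y) x _ = _
  rw [fderiv_fun_add (hf.differentiable (by simp) x) (hg.differentiable (by simp) x)]
  rfl

lemma pd_iter_add (i : Fin n) (m : ℕ) {f g : EuclideanSpace ℝ (Fin n) → F}
    (hf : ContDiff ℝ (⊤ : ℕ∞) f) (hg : ContDiff ℝ (⊤ : ℕ∞) g) :
    (partialDeriv i)^[m] (fun y => f y + g y)
      = fun y => (partialDeriv i)^[m] f y + (partialDeriv i)^[m] g y := by
  induction m with
  | zero => rfl
  | succ m ih =>
      rw [Function.iterate_succ_apply', Function.iterate_succ_apply',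
        Function.iterate_succ_apply', ih,
        pd_add i (pd_iter_smooth i m hf) (pd_iter_smooth i m hg)]

lemma md_add (L : List (Fin n)) (β : Fin n → ℕ) {f g : EuclideanSpace ℝ (Fin n) → F}
    (hf : ContDiff ℝ (⊤ : ℕ∞) f) (hg : ContDiff ℝ (⊤ : ℕ∞) g) :
    md L β (fun y => f y + g y) = fun y => md L β f y + md L β g y := by
  induction L with
  | nil => rfl
  | cons i L ih =>
      show (partialDeriv i)^[β i] (md L β (fun y => f y + g y)) = _
      rw [ih, pd_iter_add i (β i) (md_smooth L β hf) (md_smooth L β hg)]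
      rfl

lemma mderiv_add (β : Fin n → ℕ) {f g : EuclideanSpace ℝ (Fin n) → F}
    (hf : ContDiff ℝ (⊤ : ℕ∞) f) (hg : ContDiff ℝ (⊤ : ℕ∞) g) :
    mderiv β (fun y => f y + g y) = fun y => mderiv β f y + mderiv β g y := md_add _ β hf hg

lemma md_zero (L : List (Fin n)) (β : Fin n → ℕ) (hβ : ∀ i, β i = 0)
    (f : EuclideanSpace ℝ (Fin n) → F) : md L β f = f := by
  induction L with
  | nil => rfl
  | cons i L ih => show (partialDeriv i)^[β i] (md L β f) = f; rw [hβ i, ih]; rfl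

lemma mderiv_zero (β : Fin n → ℕ) (hβ : ∀ i, β i = 0) (f : EuclideanSpace ℝ (Fin n) → F) :
    mderiv β f = f := md_zero _ β hβ f

end Aux

lemma mul_smooth {n : ℕ} {χ : EuclideanSpace ℝ (Fin n) → ℝ} {h : EuclideanSpace ℝ (Fin n) → ℂ}
    (hχ : ContDiff ℝ (⊤ : ℕ∞) χ) (hh : ContDiff ℝ (⊤ : ℕ∞) h) :
    ContDiff ℝ (⊤ : ℕ∞) (fun y => (χ y : ℂ) * h y) :=
  (Complex.ofRealCLM.contDiff.comp hχ).mul hh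

/-- the localization identity. Given smooth `χ₀,…,χ_j`, `η₀,…,η_j` with
`χ₀ + η₀ ≡ 1` and `η_k ≡ χ_{k+1} + η_{k+1}` for `k < j`, a multiindex `σ` with `|σ| = j`,
`1 ≤ ℓ ≤ j`, and nested multiindices `β₀ ≤ β₁ ≤ ⋯ ≤ β_ℓ ≤ σ` with `|β_k| = k`,
setting `μ_k = β_{k+1} − β_k`, one has for every `g ∈ C^∞(ℝⁿ)`:
`D^σ g = Σ_{k≤ℓ} D^{β_k}(χ_k D^{σ−β_k} g)
  + Σ_{k<ℓ} D^{β_k}([η_k, D^{μ_k}] D^{σ−β_{k+1}} g) + D^{β_ℓ}(η_ℓ D^{σ−β_ℓ} g)`. -/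
theorem statement3 (n : ℕ) (hn : 1 ≤ n) (j : ℕ) (hj : 1 ≤ j)
    (χ η : ℕ → EuclideanSpace ℝ (Fin n) → ℝ)
    (hχ : ∀ k ≤ j, ContDiff ℝ (⊤ : ℕ∞) (χ k)) (hη : ∀ k ≤ j, ContDiff ℝ (⊤ : ℕ∞) (η k))
    (hpart0 : ∀ x, χ 0 x + η 0 x = 1)
    (hpart : ∀ k < j, ∀ x, η k x = χ (k + 1) x + η (k + 1) x)
    (σ : Fin n → ℕ) (hσ : msize σ = j)
    (ℓ : ℕ) (hℓ : 1 ≤ ℓ ∧ ℓ ≤ j)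
    (β : ℕ → Fin n → ℕ)
    (hβsize : ∀ k ≤ ℓ, msize (β k) = k)
    (hβmono : ∀ k, 1 ≤ k → k ≤ ℓ → ∀ i, β (k - 1) i ≤ β k i)
    (hβσ : ∀ i, β ℓ i ≤ σ i)
    (g : EuclideanSpace ℝ (Fin n) → ℂ) (hg : ContDiff ℝ (⊤ : ℕ∞) g) :
    ∀ x, mderiv σ g x =
      (∑ k ∈ Finset.range (ℓ + 1),
        mderiv (β k) (fun y => (χ k y : ℂ) * mderiv (fun i => σ i - β k i) g y) x)
      + (∑ k ∈ Finset.range ℓ,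
          mderiv (β k)
            (fun y =>
              (η k y : ℂ)
                * mderiv (fun i => β (k + 1) i - β k i)
                    (mderiv (fun i => σ i - β (k + 1) i) g) y
              - mderiv (fun i => β (k + 1) i - β k i)
                  (fun z => (η k z : ℂ) * mderiv (fun i => σ i - β (k + 1) i) g z) y) x)
      + mderiv (β ℓ) (fun y => (η ℓ y : ℂ) * mderiv (fun i => σ i - β ℓ i) g y) x := by
  obtain ⟨hℓ1, hℓj⟩ := hℓ
  have hchain : ∀ a b, a ≤ b → b ≤ ℓ → ∀ i, β a i ≤ β b i := by
    intro a b hab hbl i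
    have key : ∀ d, a + d ≤ ℓ → β a i ≤ β (a + d) i := by
      intro d
      induction d with
      | zero => intro _; exact le_rfl
      | succ d ih =>
          intro hd
          refine le_trans (ih (by omega)) ?_
          have := hβmono (a + d + 1) (by omega) (by omega) i
          rw [show a + (d + 1) = a + d + 1 by omega]; simpa using this
    have := key (b - a) (by omega)
    rwa [show a + (b - a) = b by omega] at this
  have hβσ' : ∀ k ≤ ℓ, ∀ i, β k i ≤ σ i :=
    fun k hk i => le_trans (hchain k ℓ hk le_rfl i) (hβσ i)
  have hβ0 : ∀ i, β 0 i = 0 := by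
    have h0 := hβsize 0 (by omega)
    unfold msize at h0
    intro i
    exact Finset.sum_eq_zero_iff.mp h0 i (Finset.mem_univ i)
  have key : ∀ m, m ≤ ℓ → ∀ x, mderiv σ g x =
      (∑ k ∈ Finset.range (m + 1),
        mderiv (β k) (fun y => (χ k y : ℂ) * mderiv (fun i => σ i - β k i) g y) x)
      + (∑ k ∈ Finset.range m,
          mderiv (β k)
            (fun y =>
              (η k y : ℂ)
                * mderiv (fun i => β (k + 1) i - β k i)
                    (mderiv (fun i => σ i - β (k + 1) i) g) y
              - mderiv (fun i => β (k + 1) i - β k i)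
                  (fun z => (η k z : ℂ) * mderiv (fun i => σ i - β (k + 1) i) g z) y) x)
      + mderiv (β m) (fun y => (η m y : ℂ) * mderiv (fun i => σ i - β m i) g y) x := by
    intro m
    induction m with
    | zero =>
        intro _ x
        have hσ0 : (fun i => σ i - β 0 i) = σ := by funext i; rw [hβ0 i]; simp
        rw [Finset.range_one, Finset.sum_singleton, Finset.range_zero, Finset.sum_empty,
          hσ0, mderiv_zero (β 0) hβ0, mderiv_zero (β 0) hβ0]
        have hc : ((χ 0 x : ℂ) + (η 0 x : ℂ)) = 1 := by exact_mod_cast hpart0 x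
        show mderiv σ g x = (χ 0 x : ℂ) * mderiv σ g x + 0 + (η 0 x : ℂ) * mderiv σ g x
        linear_combination (-(mderiv σ g x)) * hc
    | succ m ih =>
        intro hm x
        have hmℓ : m ≤ ℓ := by omega
        have hmj : m < j := by omega
        set ν : Fin n → ℕ := fun i => σ i - β (m + 1) i with hν
        set μ : Fin n → ℕ := fun i => β (m + 1) i - β m i with hμ
        have hβm : ∀ i, β m i ≤ β (m + 1) i := by
          intro i; simpa using hβmono (m + 1) (by omega) hm i
        have hgν : ContDiff ℝ (⊤ : ℕ∞) (mderiv ν g) := mderiv_smooth ν hg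
        set h : EuclideanSpace ℝ (Fin n) → ℂ := mderiv ν g with hh
        have hηm : ContDiff ℝ (⊤ : ℕ∞) (η m) := hη m (by omega)
        have hηm1 : ContDiff ℝ (⊤ : ℕ∞) (η (m + 1)) := hη (m + 1) (by omega)
        have hχm1 : ContDiff ℝ (⊤ : ℕ∞) (χ (m + 1)) := hχ (m + 1) (by omega)
        have hsub1 : (fun i => σ i - β m i) = fun i => μ i + ν i := by
          funext i
          have h1 := hβσ' (m + 1) hm i
          have h2 := hβm i
          simp only [hν, hμ]
          omega
        have hsum : β (m + 1) = fun i => β m i + μ i := by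
          funext i
          have h2 := hβm i
          simp only [hμ]
          omega
        have e1 : mderiv (fun i => σ i - β m i) g = mderiv μ h := by
          rw [hsub1, mderiv_comp μ ν hg, hh]
        have e2 : (fun y => (η m y : ℂ) * mderiv (fun i => σ i - β m i) g y)
            = fun y => ((η m y : ℂ) * mderiv μ h y
                - mderiv μ (fun z => (η m z : ℂ) * h z) y)
              + mderiv μ (fun z => (η m z : ℂ) * h z) y := by
          funext y; rw [e1]; ring
        have sm1 : ContDiff ℝ (⊤ : ℕ∞) (fun y => (η m y : ℂ) * mderiv μ h y
            - mderiv μ (fun z => (η m z : ℂ) * h z) y) :=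
          (mul_smooth hηm (mderiv_smooth μ hgν)).sub (mderiv_smooth μ (mul_smooth hηm hgν))
        have sm2 : ContDiff ℝ (⊤ : ℕ∞) (mderiv μ (fun z => (η m z : ℂ) * h z)) :=
          mderiv_smooth μ (mul_smooth hηm hgν)
        have e3 : mderiv (β m) (fun y => (η m y : ℂ) * mderiv (fun i => σ i - β m i) g y)
            = fun x => mderiv (β m) (fun y => (η m y : ℂ) * mderiv μ h y
                - mderiv μ (fun z => (η m z : ℂ) * h z) y) x
              + mderiv (β m) (mderiv μ (fun z => (η m z : ℂ) * h z)) x := by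
          rw [e2]
          exact mderiv_add (β m) sm1 sm2
        have e4 : mderiv (β m) (mderiv μ (fun z => (η m z : ℂ) * h z))
            = mderiv (β (m + 1)) (fun z => (η m z : ℂ) * h z) := by
          rw [hsum, mderiv_comp (β m) μ (mul_smooth hηm hgν)]
        have e5 : (fun z => (η m z : ℂ) * h z)
            = fun z => (χ (m + 1) z : ℂ) * h z + (η (m + 1) z : ℂ) * h z := by
          funext z
          have := hpart m hmj z
          push_cast [this]
          ring
        have e6 : mderiv (β (m + 1)) (fun z => (η m z : ℂ) * h z)
            = fun x => mderiv (β (m + 1)) (fun z => (χ (m + 1) z : ℂ) * h z) x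
              + mderiv (β (m + 1)) (fun z => (η (m + 1) z : ℂ) * h z) x := by
          rw [e5]
          exact mderiv_add (β (m + 1)) (mul_smooth hχm1 hgν) (mul_smooth hηm1 hgν)
        rw [Finset.sum_range_succ, Finset.sum_range_succ
          (f := fun k => mderiv (β k)
            (fun y =>
              (η k y : ℂ)
                * mderiv (fun i => β (k + 1) i - β k i)
                    (mderiv (fun i => σ i - β (k + 1) i) g) y
              - mderiv (fun i => β (k + 1) i - β k i)
                  (fun z => (η k z : ℂ) * mderiv (fun i => σ i - β (k + 1) i) g z) y) x),
          ih hmℓ x, e3, e4, e6]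
        ring
  exact key ℓ le_rfl
end

section
/- For every n ≥ 1, every multiindex β ∈ ℕ₀ⁿ, and every x ∈ ℝⁿ \ {0}: |(D^β f)(x)| ≤ β! · ((2n+2)/|x|)^{|β|} · e^{−|x|²/2}, where f(x) = e^{−|x|²}. -/
open MeasureTheory Metric Real Finset

open scoped ContDiff Nat

/-!
The Gaussian factors as `∏ i, exp (-(x i)²)`, so `D^β` of it is the product of the one-variable
derivatives `(d/dt)^{βᵢ} exp (-t²)` at `t = x i`. Each of these is bounded by Cauchy's estimate for
the entire function `exp (-z²)` on the circle of radius `ρ` around `t`, on which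
`|exp (-z²)| ≤ exp (-3t²/5 + 3ρ²/2)`. Multiplying and choosing `ρ = |x| / (2n+2)` gives the claim,
since `3nρ²/2 ≤ |x|²/10`.
-/

lemma iteratedDeriv_re_comp_ofReal {e : ℂ → ℂ} (he : Differentiable ℂ e) (k : ℕ) (t : ℝ) :
    iteratedDeriv k (fun s : ℝ => (e s).re) t = (iteratedDeriv k e t).re := by
  induction k generalizing e with
  | zero => simp
  | succ k ih =>
    have hderiv : deriv (fun s : ℝ => (e s).re) = fun s : ℝ => (deriv e s).re :=
      funext fun s => (he s).hasDerivAt.real_of_complex.deriv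
    rw [iteratedDeriv_succ', iteratedDeriv_succ', hderiv, ih he.deriv]

lemma norm_cexp_neg_sq_le_of_mem_sphere {t ρ : ℝ} {z : ℂ} (hz : z ∈ sphere (t : ℂ) ρ) :
    ‖Complex.exp (-z ^ 2)‖ ≤ rexp (-(3 / 5) * t ^ 2 + (3 / 2) * ρ ^ 2) := by
  have hρ : (z.re - t) ^ 2 + z.im ^ 2 = ρ ^ 2 := by
    rw [mem_sphere_iff_norm] at hz
    rw [← hz, Complex.sq_norm, Complex.normSq_apply]
    simp only [Complex.sub_re, Complex.ofReal_re, Complex.sub_im, Complex.ofReal_im, sub_zero]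
    ring
  rw [Complex.norm_exp, Real.exp_le_exp]
  have hre : (-z ^ 2).re = z.im ^ 2 - z.re ^ 2 := by simp [sq]
  rw [hre]
  -- the slack is `(2t + 5(re z - t))² / 10 + (im z)² / 2`
  nlinarith [sq_nonneg (2 * t + 5 * (z.re - t))]

lemma abs_iteratedDeriv_exp_neg_sq_le (k : ℕ) (t : ℝ) {ρ : ℝ} (hρ : 0 < ρ) :
    |iteratedDeriv k (fun s : ℝ => rexp (-s ^ 2)) t|
      ≤ k ! * rexp (-(3 / 5) * t ^ 2 + (3 / 2) * ρ ^ 2) / ρ ^ k := by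
  have hG : Differentiable ℂ fun z : ℂ => Complex.exp (-z ^ 2) := by fun_prop
  have hre : (fun s : ℝ => rexp (-s ^ 2)) = fun s : ℝ => (Complex.exp (-(s : ℂ) ^ 2)).re := by
    funext s
    rw [← Complex.ofReal_pow, ← Complex.ofReal_neg, Complex.exp_ofReal_re]
  rw [hre, iteratedDeriv_re_comp_ofReal hG]
  exact (Complex.abs_re_le_norm _).trans <|
    Complex.norm_iteratedDeriv_le_of_forall_mem_sphere_norm_le k hρ hG.diffContOnCl
      fun _ hz => norm_cexp_neg_sq_le_of_mem_sphere hz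

section ProdIteratedDeriv

variable {n : ℕ} (g : ℝ → ℝ)

noncomputable def prodIteratedDeriv (c : Fin n → ℕ) (y : EuclideanSpace ℝ (Fin n)) : ℝ :=
  ∏ i, iteratedDeriv (c i) g (y i)

variable {g}

lemma partialDeriv_prodIteratedDeriv (hg : ContDiff ℝ ∞ g) (c : Fin n → ℕ) (i : Fin n) :
    partialDeriv i (prodIteratedDeriv g c) = prodIteratedDeriv g (c + Pi.single i 1) := by
  funext y
  have hfactor (j : Fin n) :
      HasFDerivAt (fun x : EuclideanSpace ℝ (Fin n) => iteratedDeriv (c j) g (x j))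
        (iteratedDeriv (c j + 1) g (y j) • EuclideanSpace.proj (𝕜 := ℝ) j) y := by
    rw [iteratedDeriv_succ]
    exact (hg.differentiable_iteratedDeriv _ (mod_cast ENat.natCast_lt_top _) _).hasDerivAt
      |>.comp_hasFDerivAt y (EuclideanSpace.proj (𝕜 := ℝ) j).hasFDerivAt
  have hprod : HasFDerivAt (prodIteratedDeriv g c) _ y :=
    HasFDerivAt.finsetProd fun j _ => hfactor j
  rw [partialDeriv, hprod.fderiv, _root_.sum_apply, sum_eq_single i]
  · simp only [smul_apply, PiLp.proj_apply, PiLp.single_eq_same, smul_eq_mul, mul_one,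
      prodIteratedDeriv, Pi.add_apply, ← mul_prod_erase univ _ (mem_univ i), Pi.single_eq_same]
    rw [mul_comm]
    congr 1
    exact prod_congr rfl fun j hj => by rw [Pi.single_eq_of_ne (ne_of_mem_erase hj), add_zero]
  · intro j _ hj
    simp [hj]
  · simp

lemma iterate_partialDeriv_prodIteratedDeriv (hg : ContDiff ℝ ∞ g) (c : Fin n → ℕ) (i : Fin n)
    (m : ℕ) :
    (partialDeriv i)^[m] (prodIteratedDeriv g c) = prodIteratedDeriv g (c + Pi.single i m) := by
  induction m with
  | zero => simp
  | succ m ih =>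
    rw [Function.iterate_succ_apply', ih, partialDeriv_prodIteratedDeriv hg, add_assoc,
      ← Pi.single_add]

lemma foldr_iterate_partialDeriv_prodIteratedDeriv (hg : ContDiff ℝ ∞ g) (β : Fin n → ℕ)
    (l : List (Fin n)) (c : Fin n → ℕ) :
    l.foldr (fun i f => (partialDeriv i)^[β i] f) (prodIteratedDeriv g c)
      = prodIteratedDeriv g (c + (l.map fun i => Pi.single i (β i)).sum) := by
  induction l with
  | nil => simp
  | cons i l ih =>
    rw [List.foldr_cons, ih, iterate_partialDeriv_prodIteratedDeriv hg, List.map_cons,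
      List.sum_cons, add_assoc, add_comm (List.sum _)]

lemma mderiv_prodIteratedDeriv_zero (hg : ContDiff ℝ ∞ g) (β : Fin n → ℕ) :
    mderiv β (prodIteratedDeriv g 0) = prodIteratedDeriv g β := by
  rw [mderiv, foldr_iterate_partialDeriv_prodIteratedDeriv hg, ← Fin.sum_univ_def,
    univ_sum_single, zero_add]

end ProdIteratedDeriv

lemma exp_neg_norm_sq_eq_prodIteratedDeriv {n : ℕ} :
    (fun y : EuclideanSpace ℝ (Fin n) => rexp (-‖y‖ ^ 2))
      = prodIteratedDeriv (fun s => rexp (-s ^ 2)) 0 := by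
  funext y
  simp [prodIteratedDeriv, EuclideanSpace.norm_sq_eq, ← Real.exp_sum]

lemma abs_mderiv_exp_neg_norm_sq_le {n : ℕ} (β : Fin n → ℕ) (x : EuclideanSpace ℝ (Fin n))
    {ρ : ℝ} (hρ : 0 < ρ) :
    |mderiv β (fun y => rexp (-‖y‖ ^ 2)) x|
      ≤ mfactorial β * rexp (-(3 / 5) * ‖x‖ ^ 2 + (3 / 2) * n * ρ ^ 2) / ρ ^ msize β := by
  have hg : ContDiff ℝ ∞ fun s : ℝ => rexp (-s ^ 2) := by fun_prop
  rw [exp_neg_norm_sq_eq_prodIteratedDeriv, mderiv_prodIteratedDeriv_zero hg, prodIteratedDeriv,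
    abs_prod]
  calc ∏ i, |iteratedDeriv (β i) (fun s => rexp (-s ^ 2)) (x i)|
      ≤ ∏ i, (β i)! * rexp (-(3 / 5) * x i ^ 2 + (3 / 2) * ρ ^ 2) / ρ ^ β i :=
        prod_le_prod (fun _ _ => abs_nonneg _) fun i _ => abs_iteratedDeriv_exp_neg_sq_le _ _ hρ
    _ = _ := by
        rw [prod_div_distrib, prod_mul_distrib, ← Real.exp_sum, prod_pow_eq_pow_sum,
          sum_add_distrib, ← mul_sum, EuclideanSpace.norm_sq_eq]
        simp only [mfactorial, msize, Nat.cast_prod, Real.norm_eq_abs, sq_abs, sum_const,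
          card_univ, Fintype.card_fin, nsmul_eq_mul]
        ring_nf

theorem statement8_general (n : ℕ) (β : Fin n → ℕ)
    (x : EuclideanSpace ℝ (Fin n)) (hx : x ≠ 0) :
    |mderiv β (fun y => Real.exp (-‖y‖ ^ 2)) x|
      ≤ (mfactorial β : ℝ) * ((2 * n + 2) / ‖x‖) ^ (msize β) * Real.exp (-‖x‖ ^ 2 / 2) := by
  set r := ‖x‖
  have hr : 0 < r := norm_pos_iff.mpr hx
  have hN : (0 : ℝ) < 2 * n + 2 := by positivity
  have hexponent : -(3 / 5) * r ^ 2 + (3 / 2) * n * (r / (2 * n + 2)) ^ 2 ≤ -r ^ 2 / 2 := by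
    have hquadratic : 0 ≤ 4 * (n : ℝ) ^ 2 - 7 * n + 4 := by
      nlinarith [sq_nonneg (8 * (n : ℝ) - 7)]
    rw [div_pow, ← sub_nonneg]
    convert (by positivity : 0 ≤ r ^ 2 * (4 * (n : ℝ) ^ 2 - 7 * n + 4) / (10 * (2 * n + 2) ^ 2))
      using 1
    field_simp
    ring
  calc |mderiv β (fun y => rexp (-‖y‖ ^ 2)) x|
      ≤ mfactorial β * rexp (-(3 / 5) * r ^ 2 + (3 / 2) * n * (r / (2 * n + 2)) ^ 2)
          / (r / (2 * n + 2)) ^ msize β :=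
        abs_mderiv_exp_neg_norm_sq_le β x (div_pos hr hN)
    _ ≤ mfactorial β * rexp (-r ^ 2 / 2) / (r / (2 * n + 2)) ^ msize β := by gcongr
    _ = _ := by rw [div_eq_mul_inv, ← inv_pow, inv_div]; ring

/-- for `f(x) = e^{-|x|²}` on `ℝⁿ`, `n ≥ 1`, every multiindex `β` and `x ≠ 0`,
`|D^β f (x)| ≤ β! ((2n+2)/|x|)^{|β|} e^{-|x|²/2}`. -/
theorem statement8 (n : ℕ) (hn : 1 ≤ n) (β : Fin n → ℕ)
    (x : EuclideanSpace ℝ (Fin n)) (hx : x ≠ 0) :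
    |mderiv β (fun y => Real.exp (-‖y‖ ^ 2)) x|
      ≤ (mfactorial β : ℝ) * ((2 * n + 2) / ‖x‖) ^ (msize β) * Real.exp (-‖x‖ ^ 2 / 2) :=
  statement8_general n β x hx
end

section
/- Let n ≥ 2. For every multiindex β ∈ ℕ₀ⁿ, every t > 0, and every x ∈ ℝⁿ \ {0}: |D_x^β ( e^{−t|x|} / |x|^{n−1} )| ≤ β! · (√2/|x|)^{n−1} · ((2n+2)/|x|)^{|β|} · e^{−t|x|/2}. -/
/-!
The kernel `e^{-t|y|} / |y|^{n-1}` is the restriction to `ℝⁿ` of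
`F(z) = e^{-t W(z)} / W(z)^{n-1}`, `W(z) = √(z₁² + ⋯ + zₙ²)`, which is holomorphic where
`Re ∑ zᵢ² > 0`. On the polydisc of radius `r = |x| / (2n+2)` about `x` one has
`Re ∑ zᵢ² ≥ |x|² / 2`, hence `Re W ≥ |x| / √2` and `|F| ≤ (√2 / |x|)^{n-1} e^{-t|x|/2}`.
Cauchy's estimate, applied one coordinate at a time, bounds `|D^β F(x)|` by `β! sup |F| / r^{|β|}`,
and the real partial derivatives of the kernel are the real parts of the complex ones.
-/

open MeasureTheory Metric Real Finset

open Function Set Topology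

section MultiIterate

variable {ι α γ : Type*}

def multiIterate (D : ι → α → α) (β : ι → ℕ) (l : List ι) (a : α) : α :=
  l.foldr (fun i g => (D i)^[β i] g) a

@[simp]
theorem multiIterate_nil (D : ι → α → α) (β : ι → ℕ) (a : α) : multiIterate D β [] a = a := rfl

@[simp]
theorem multiIterate_cons (D : ι → α → α) (β : ι → ℕ) (i : ι) (l : List ι) (a : α) :
    multiIterate D β (i :: l) a = (D i)^[β i] (multiIterate D β l a) := rfl

theorem multiIterate_rel {D : ι → α → α} {E : ι → γ → γ} (R : α → γ → Prop)
    (hDE : ∀ i a c, R a c → R (D i a) (E i c)) (β : ι → ℕ) (l : List ι) {a : α} {c : γ}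
    (h : R a c) : R (multiIterate D β l a) (multiIterate E β l c) := by
  induction l with
  | nil => exact h
  | cons i l ih =>
    rw [multiIterate_cons, multiIterate_cons]
    induction β i with
    | zero => exact ih
    | succ k ihk =>
      rw [iterate_succ_apply', iterate_succ_apply']
      exact hDE _ _ _ ihk

theorem multiIterate_induction {D : ι → α → α} (P : α → Prop) (hD : ∀ i a, P a → P (D i a))
    (β : ι → ℕ) (l : List ι) {a : α} (h : P a) : P (multiIterate D β l a) :=
  multiIterate_rel (E := fun _ => id) (fun a (_ : Unit) => P a) (fun i a _ => hD i a) β l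
    (c := ()) h

end MultiIterate

theorem mderiv_eq_multiIterate {n : ℕ} {F : Type*} [NormedAddCommGroup F] [NormedSpace ℝ F]
    (β : Fin n → ℕ) (f : EuclideanSpace ℝ (Fin n) → F) :
    mderiv β f = multiIterate partialDeriv β (List.finRange n) f := rfl

variable {n : ℕ}

noncomputable def complexPartialDeriv (i : Fin n) (G : (Fin n → ℂ) → ℂ) : (Fin n → ℂ) → ℂ :=
  fun z => fderiv ℂ G z (Pi.single i 1)

theorem AnalyticAt.complexPartialDeriv {G : (Fin n → ℂ) → ℂ} {z : Fin n → ℂ}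
    (hG : AnalyticAt ℂ G z) (i : Fin n) : AnalyticAt ℂ (complexPartialDeriv i G) z :=
  ((ContinuousLinearMap.apply ℂ ℂ (Pi.single i (1 : ℂ) : Fin n → ℂ)).analyticAt _).comp hG.fderiv

theorem AnalyticOnNhd.multiIterate_complexPartialDeriv {G : (Fin n → ℂ) → ℂ}
    {s : Set (Fin n → ℂ)} (hG : AnalyticOnNhd ℂ G s) (β : Fin n → ℕ) (l : List (Fin n)) :
    AnalyticOnNhd ℂ (multiIterate complexPartialDeriv β l G) s :=
  multiIterate_induction (fun G => AnalyticOnNhd ℂ G s)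
    (fun i _ hG z hz => (hG z hz).complexPartialDeriv i) β l hG

theorem hasDerivAt_comp_update {G : (Fin n → ℂ) → ℂ} {z : Fin n → ℂ} {i : Fin n} {w : ℂ}
    (hG : DifferentiableAt ℂ G (update z i w)) :
    HasDerivAt (fun w => G (update z i w)) (complexPartialDeriv i G (update z i w)) w :=
  hG.hasFDerivAt.comp_hasDerivAt w (hasDerivAt_update z i w)

theorem complexPartialDeriv_iterate_eq_iteratedDeriv (i : Fin n) (k : ℕ)
    {G : (Fin n → ℂ) → ℂ} {z : Fin n → ℂ} (hG : AnalyticAt ℂ G z) :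
    (complexPartialDeriv i)^[k] G z = iteratedDeriv k (fun w => G (update z i w)) (z i) := by
  induction k generalizing G with
  | zero => simp
  | succ k ih =>
    rw [iterate_succ_apply, ih (hG.complexPartialDeriv i), iteratedDeriv_succ']
    apply Filter.EventuallyEq.iteratedDeriv_eq
    have hslice : ∀ᶠ w in 𝓝 (z i), AnalyticAt ℂ G (update z i w) :=
      (hasDerivAt_update z i (z i)).continuousAt.eventually
        (by simpa using hG.eventually_analyticAt)
    filter_upwards [hslice] with w hw
    exact (hasDerivAt_comp_update hw.differentiableAt).deriv.symm

def polydisc (z : Fin n → ℂ) (r : ℝ) (l : List (Fin n)) : Set (Fin n → ℂ) :=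
  {w | ∀ i, (i ∈ l → dist (w i) (z i) ≤ r) ∧ (i ∉ l → w i = z i)}

theorem self_mem_polydisc {z : Fin n → ℂ} {r : ℝ} (hr : 0 ≤ r) (l : List (Fin n)) :
    z ∈ polydisc z r l :=
  fun _ => ⟨fun _ => by simpa using hr, fun _ => rfl⟩

theorem polydisc_update_subset {z : Fin n → ℂ} {r : ℝ} {i : Fin n} {l : List (Fin n)}
    (hi : i ∉ l) {w : ℂ} (hw : dist w (z i) ≤ r) :
    polydisc (update z i w) r l ⊆ polydisc z r (i :: l) := by
  intro v hv j
  rcases eq_or_ne j i with rfl | hji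
  · simpa [(hv j).2 hi] using hw
  · simpa [hji, update_of_ne hji] using hv j

theorem norm_multiIterate_complexPartialDeriv_le {r M : ℝ} (hr : 0 < r) (β : Fin n → ℕ)
    {l : List (Fin n)} (hl : l.Nodup) {G : (Fin n → ℂ) → ℂ} {z : Fin n → ℂ}
    (hG : AnalyticOnNhd ℂ G (polydisc z r l)) (hM : ∀ w ∈ polydisc z r l, ‖G w‖ ≤ M) :
    ‖multiIterate complexPartialDeriv β l G z‖
      ≤ (l.map fun i => ((β i).factorial : ℝ)).prod * M / r ^ (l.map β).sum := by
  induction l generalizing z with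
  | nil => simpa using hM z (self_mem_polydisc hr.le [])
  | cons i l ih =>
    obtain ⟨hi, hl⟩ := List.nodup_cons.mp hl
    set H := multiIterate complexPartialDeriv β l G
    have hH : AnalyticOnNhd ℂ H (polydisc z r (i :: l)) := hG.multiIterate_complexPartialDeriv β l
    have hsub (w : ℂ) (hw : w ∈ closedBall (z i) r) :
        polydisc (update z i w) r l ⊆ polydisc z r (i :: l) :=
      polydisc_update_subset hi (mem_closedBall.mp hw)
    have hslice : DiffContOnCl ℂ (fun w => H (update z i w)) (ball (z i) r) := by
      refine DifferentiableOn.diffContOnCl_ball (fun w hw => ?_) subset_rfl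
      have hw' := hH _ (hsub w hw (self_mem_polydisc hr.le l))
      exact (hasDerivAt_comp_update hw'.differentiableAt).differentiableAt.differentiableWithinAt
    have hbound (w : ℂ) (hw : w ∈ sphere (z i) r) : ‖H (update z i w)‖
        ≤ (l.map fun i => ((β i).factorial : ℝ)).prod * M / r ^ (l.map β).sum := by
      have hsub' := hsub w (sphere_subset_closedBall hw)
      exact ih hl (hG.mono hsub') fun v hv => hM v (hsub' hv)
    rw [multiIterate_cons, complexPartialDeriv_iterate_eq_iteratedDeriv i (β i)
      (hH z (self_mem_polydisc hr.le _))]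
    refine (Complex.norm_iteratedDeriv_le_of_forall_mem_sphere_norm_le (β i) hr hslice
      hbound).trans_eq ?_
    simp only [List.map_cons, List.prod_cons, List.sum_cons, pow_add]
    field_simp

noncomputable def complexEmbedding (n : ℕ) : EuclideanSpace ℝ (Fin n) →L[ℝ] (Fin n → ℂ) :=
  ContinuousLinearMap.pi fun i => Complex.ofRealCLM.comp (EuclideanSpace.proj i)

@[simp]
theorem complexEmbedding_apply (y : EuclideanSpace ℝ (Fin n)) (i : Fin n) :
    complexEmbedding n y i = y i := rfl

theorem complexEmbedding_single (i : Fin n) :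
    complexEmbedding n (EuclideanSpace.single i 1) = Pi.single i 1 := by
  ext j
  rcases eq_or_ne j i with rfl | hj
  · simp
  · simp [hj]

theorem partialDeriv_re_comp_complexEmbedding {G : (Fin n → ℂ) → ℂ}
    {y : EuclideanSpace ℝ (Fin n)} (hG : DifferentiableAt ℂ G (complexEmbedding n y))
    (i : Fin n) :
    partialDeriv i (fun v => (G (complexEmbedding n v)).re) y
      = (complexPartialDeriv i G (complexEmbedding n y)).re := by
  have h := Complex.reCLM.hasFDerivAt.comp y
    ((hG.hasFDerivAt.restrictScalars ℝ).comp y (complexEmbedding n).hasFDerivAt)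
  change fderiv ℝ (Complex.reCLM ∘ G ∘ complexEmbedding n) y _ = _
  simp only [h.fderiv, ContinuousLinearMap.coe_comp, comp_apply, complexEmbedding_single]
  rfl

theorem Set.EqOn.partialDeriv {F : Type*} [NormedAddCommGroup F] [NormedSpace ℝ F]
    {V : Set (EuclideanSpace ℝ (Fin n))} (hV : IsOpen V) {f g : EuclideanSpace ℝ (Fin n) → F}
    (h : EqOn f g V) (i : Fin n) : EqOn (partialDeriv i f) (partialDeriv i g) V := fun y hy => by
  simp only [_root_.partialDeriv, (Filter.eventuallyEq_of_mem (hV.mem_nhds hy) h).fderiv_eq]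

theorem eqOn_multiIterate_partialDeriv {U : Set (Fin n → ℂ)} (hU : IsOpen U)
    {G : (Fin n → ℂ) → ℂ} (hG : AnalyticOnNhd ℂ G U) {f : EuclideanSpace ℝ (Fin n) → ℝ}
    (hf : EqOn f (fun v => (G (complexEmbedding n v)).re) (complexEmbedding n ⁻¹' U))
    (β : Fin n → ℕ) (l : List (Fin n)) :
    EqOn (multiIterate partialDeriv β l f)
      (fun v => (multiIterate complexPartialDeriv β l G (complexEmbedding n v)).re)
      (complexEmbedding n ⁻¹' U) := by
  have hV : IsOpen (complexEmbedding n ⁻¹' U) := hU.preimage (complexEmbedding n).continuous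
  refine (multiIterate_rel (fun f G => AnalyticOnNhd ℂ G U ∧
      EqOn f (fun v => (G (complexEmbedding n v)).re) (complexEmbedding n ⁻¹' U))
    (fun i f G ⟨hG, hf⟩ => ⟨fun z hz => (hG z hz).complexPartialDeriv i, fun y hy => ?_⟩)
    β l ⟨hG, hf⟩).2
  exact (hf.partialDeriv hV i hy).trans
    (partialDeriv_re_comp_complexEmbedding (hG _ hy).differentiableAt i)

theorem half_sq_norm_le_sq_norm_add_sub {E : Type*} [SeminormedAddCommGroup E] (x p : E)
    {q ρ : ℝ} (hρ : 0 ≤ ρ) (hpq : ‖p‖ ^ 2 + q ^ 2 ≤ ρ ^ 2) (hρx : 4 * ρ ≤ ‖x‖) :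
    ‖x‖ ^ 2 / 2 ≤ ‖x + p‖ ^ 2 - q ^ 2 := by
  have hp : ‖p‖ ≤ ρ := by nlinarith [norm_nonneg p, sq_nonneg q]
  have htri : ‖x‖ - ‖p‖ ≤ ‖x + p‖ := by simpa using norm_sub_le (x + p) p
  -- `(‖x‖ - ‖p‖)² + ‖p‖² - ρ² ≥ (‖x‖ - ρ)² ≥ (3‖x‖/4)²`
  nlinarith [norm_nonneg p, mul_le_mul htri htri (by linarith) (norm_nonneg _)]

theorem half_sq_norm_le_re_sum_sq {x : EuclideanSpace ℝ (Fin n)} {w : Fin n → ℂ} {r : ℝ}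
    (hr : 0 ≤ r) (hw : ∀ i, ‖w i - x i‖ ≤ r) (hx : 4 * (√n * r) ≤ ‖x‖) :
    ‖x‖ ^ 2 / 2 ≤ (∑ i, w i ^ 2).re := by
  set a : EuclideanSpace ℝ (Fin n) := WithLp.toLp 2 fun i => (w i).re
  set b : EuclideanSpace ℝ (Fin n) := WithLp.toLp 2 fun i => (w i).im
  have hre : (∑ i, w i ^ 2).re = ‖x + (a - x)‖ ^ 2 - ‖b‖ ^ 2 := by
    rw [add_sub_cancel, EuclideanSpace.real_norm_sq_eq, EuclideanSpace.real_norm_sq_eq]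
    simp [Complex.re_sum, sq, a, b]
  have hdist : ‖a - x‖ ^ 2 + ‖b‖ ^ 2 ≤ (√n * r) ^ 2 := by
    rw [EuclideanSpace.real_norm_sq_eq, EuclideanSpace.real_norm_sq_eq, ← Finset.sum_add_distrib,
      mul_pow, Real.sq_sqrt n.cast_nonneg]
    calc ∑ i, ((a - x) i ^ 2 + b i ^ 2) = ∑ i, ‖w i - x i‖ ^ 2 := by
          refine Finset.sum_congr rfl fun i _ => ?_
          rw [Complex.sq_norm, Complex.normSq_apply]
          simp [a, b, sq]
      _ ≤ ∑ _i : Fin n, r ^ 2 := by gcongr with i; exact hw i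
      _ = n * r ^ 2 := by simp
  rw [hre]
  exact half_sq_norm_le_sq_norm_add_sub x (a - x) (by positivity) hdist hx

theorem Complex.sqrt_re_le_re_sqrt (a : ℂ) : √a.re ≤ (Complex.sqrt a).re := by
  rw [Complex.sqrt, Complex.cpow_inv_two_re]
  exact Real.sqrt_le_sqrt (by linarith [Complex.re_le_norm a])

/-- The holomorphic extension of the Euclidean norm to `Re ∑ zᵢ² > 0`, via the principal branch
of the square root. -/
noncomputable def complexNorm (z : Fin n → ℂ) : ℂ := Complex.sqrt (∑ i, z i ^ 2)

noncomputable def complexKernel (t : ℝ) (m : ℕ) (z : Fin n → ℂ) : ℂ :=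
  Complex.exp (-t * complexNorm z) / complexNorm z ^ m

theorem complexNorm_complexEmbedding (y : EuclideanSpace ℝ (Fin n)) :
    complexNorm (complexEmbedding n y) = ‖y‖ := by
  have hsum : ∑ i, complexEmbedding n y i ^ 2 = ((‖y‖ ^ 2 : ℝ) : ℂ) := by
    simp [EuclideanSpace.real_norm_sq_eq]
  rw [complexNorm, hsum, Complex.sqrt_of_nonneg (Complex.zero_le_real.mpr (by positivity)),
    Complex.ofReal_re, Real.sqrt_sq (norm_nonneg y)]

theorem re_complexKernel_complexEmbedding (t : ℝ) (m : ℕ) (y : EuclideanSpace ℝ (Fin n)) :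
    (complexKernel t m (complexEmbedding n y)).re = rexp (-t * ‖y‖) / ‖y‖ ^ m := by
  rw [complexKernel, complexNorm_complexEmbedding]
  norm_cast

theorem analyticOnNhd_complexKernel (t : ℝ) (m : ℕ) :
    AnalyticOnNhd ℂ (complexKernel t m) {z : Fin n → ℂ | 0 < (∑ i, z i ^ 2).re} := by
  intro z hz
  have hsum : AnalyticAt ℂ (fun z : Fin n → ℂ => ∑ i, z i ^ 2) z :=
    Finset.analyticAt_fun_sum _ fun i _ =>
      ((ContinuousLinearMap.proj i : (Fin n → ℂ) →L[ℂ] ℂ).analyticAt z).pow 2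
  have hnorm : AnalyticAt ℂ complexNorm z := hsum.cpow analyticAt_const (Or.inl hz)
  have hnorm0 : complexNorm z ≠ 0 := fun h => by
    have := (Real.sqrt_pos.mpr hz).trans_le (Complex.sqrt_re_le_re_sqrt _)
    simp_all [complexNorm]
  exact ((analyticAt_const.mul hnorm).cexp).div (hnorm.pow m) (pow_ne_zero _ hnorm0)

theorem norm_complexKernel_le {t ρ : ℝ} (ht : 0 ≤ t) (hρ : 0 < ρ) (m : ℕ) {z : Fin n → ℂ}
    (hz : ρ ^ 2 / 2 ≤ (∑ i, z i ^ 2).re) :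
    ‖complexKernel t m z‖ ≤ (√2 / ρ) ^ m * rexp (-t * ρ / 2) := by
  have hre : ρ / √2 ≤ (complexNorm z).re :=
    calc ρ / √2 = √(ρ ^ 2 / 2) := by rw [Real.sqrt_div' _ zero_le_two, Real.sqrt_sq hρ.le]
      _ ≤ √(∑ i, z i ^ 2).re := Real.sqrt_le_sqrt hz
      _ ≤ (complexNorm z).re := Complex.sqrt_re_le_re_sqrt _
  have hre_half : ρ / 2 ≤ (complexNorm z).re := by
    refine le_trans (div_le_div_of_nonneg_left hρ.le (by positivity) ?_) hre
    nlinarith [Real.sq_sqrt zero_le_two, Real.sqrt_nonneg 2]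
  rw [complexKernel, norm_div, norm_pow, Complex.norm_exp]
  calc rexp (-t * complexNorm z).re / ‖complexNorm z‖ ^ m
      ≤ rexp (-t * ρ / 2) / (ρ / √2) ^ m := by
        gcongr
        · simp only [neg_mul, Complex.neg_re, Complex.re_ofReal_mul]
          nlinarith
        · exact hre.trans (Complex.re_le_norm _)
    _ = (√2 / ρ) ^ m * rexp (-t * ρ / 2) := by
        rw [div_eq_mul_inv, ← inv_pow, inv_div, mul_comm]

theorem four_mul_sqrt_le_two_mul_add_two (n : ℕ) : 4 * √n ≤ 2 * n + 2 := by
  nlinarith [Real.sq_sqrt n.cast_nonneg, sq_nonneg (√n - 1)]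

theorem statement12_general (n : ℕ) (β : Fin n → ℕ) (t : ℝ) (ht : 0 < t)
    (x : EuclideanSpace ℝ (Fin n)) (hx : x ≠ 0) :
    |mderiv β (fun y => Real.exp (-t * ‖y‖) / ‖y‖ ^ (n - 1)) x|
      ≤ (mfactorial β : ℝ) * (Real.sqrt 2 / ‖x‖) ^ (n - 1) * ((2 * n + 2) / ‖x‖) ^ (msize β)
        * Real.exp (-t * ‖x‖ / 2) := by
  have hx0 : 0 < ‖x‖ := norm_pos_iff.mpr hx
  set r := ‖x‖ / (2 * n + 2)
  have hr : 0 < r := by positivity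
  set U : Set (Fin n → ℂ) := {z | 0 < (∑ i, z i ^ 2).re}
  have hU : IsOpen U := isOpen_lt continuous_const (by fun_prop)
  set D := polydisc (complexEmbedding n x) r (List.finRange n)
  have hD (w : Fin n → ℂ) (hw : w ∈ D) : ‖x‖ ^ 2 / 2 ≤ (∑ i, w i ^ 2).re := by
    refine half_sq_norm_le_re_sum_sq hr.le (fun i => ?_) ?_
    · simpa [dist_eq_norm] using (hw i).1 (List.mem_finRange i)
    · calc 4 * (√n * r) = 4 * √n * r := by ring
        _ ≤ (2 * n + 2) * r := by gcongr; exact four_mul_sqrt_le_two_mul_add_two n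
        _ = ‖x‖ := mul_div_cancel₀ _ (by positivity)
  have hDU : D ⊆ U := fun w hw => (by positivity : (0 : ℝ) < ‖x‖ ^ 2 / 2).trans_le (hD w hw)
  have hcauchy := norm_multiIterate_complexPartialDeriv_le hr β (List.nodup_finRange n)
    ((analyticOnNhd_complexKernel t (n - 1)).mono hDU)
    (fun w hw => norm_complexKernel_le ht.le hx0 (n - 1) (hD w hw))
  rw [mderiv_eq_multiIterate, eqOn_multiIterate_partialDeriv hU (analyticOnNhd_complexKernel t _)
    (fun y _ => (re_complexKernel_complexEmbedding t _ y).symm) β _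
    (hDU (self_mem_polydisc hr.le _))]
  refine (Complex.abs_re_le_norm _).trans (hcauchy.trans_eq ?_)
  rw [mfactorial, msize, Nat.cast_prod, Fin.prod_univ_def, Fin.sum_univ_def, div_eq_mul_inv,
    ← inv_pow, inv_div]
  ring

/-- for `n ≥ 2`, every multiindex `β`, every `t > 0` and `x ≠ 0` in `ℝⁿ`,
`|D^β (e^{−t|x|}/|x|^{n−1})| ≤ β! (√2/|x|)^{n−1} ((2n+2)/|x|)^{|β|} e^{−t|x|/2}`. -/
theorem statement12 (n : ℕ) (hn : 2 ≤ n) (β : Fin n → ℕ) (t : ℝ) (ht : 0 < t)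
    (x : EuclideanSpace ℝ (Fin n)) (hx : x ≠ 0) :
    |mderiv β (fun y => Real.exp (-t * ‖y‖) / ‖y‖ ^ (n - 1)) x|
      ≤ (mfactorial β : ℝ) * (Real.sqrt 2 / ‖x‖) ^ (n - 1) * ((2 * n + 2) / ‖x‖) ^ (msize β)
        * Real.exp (-t * ‖x‖ / 2) :=
  statement12_general n β t ht x hx
end
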